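/- The function φ(t) = 2π ∑_{n=1}^∞ (2π n⁴ e^{-9t/2} - 3 n² e^{-5t/2}) exp(-n² π e^{-2t}) is strictly positive for all real t. -/

import Mathlib

open Real

noncomputable def phi (t : ℝ) : ℝ :=
  2 * π * ∑' n : ℕ,
    (2 * π * ((n : ℝ) + 1) ^ 4 * Real.exp (-9 * t / 2)
      - 3 * ((n : ℝ) + 1) ^ 2 * Real.exp (-5 * t / 2))
    * Real.exp (-((n : ℝ) + 1) ^ 2 * π * Real.exp (-2 * t))

/-!
Put `θₖ(u) = ∑_{n ∈ ℤ} nᵏ e^{-π n² u}` and `K(u) = 2π u θ₄(u) - 3 θ₂(u)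
= ∑_{n ∈ ℤ} (2π u n⁴ - 3 n²) e^{-π n² u}`. With `u = e^{-2t}` one has `φ(t) = π e^{-5t/2} K(u)`.
For `u ≥ 1` every term of `K(u)` is nonnegative and those with `n = ±1` are positive.
The case `u < 1` reduces to this by modularity: Jacobi's identity `θ₀(u) = u^{-1/2} θ₀(1/u)` says
that `Ψ(s) = e^{s/4} θ₀(e^s)` is even, hence so is `Ψ''`, and since `θₖ' = -π θₖ₊₂` a direct
computation gives `Ψ'' = Ψ / 16 + (π / 2) e^{5s/4} K(e^s)`. So `s ↦ e^{5s/4} K(e^s)` is even too.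
-/

theorem Function.Even.deriv {𝕜 F : Type*} [NontriviallyNormedField 𝕜] [NormedAddCommGroup F]
    [NormedSpace 𝕜 F] {f : 𝕜 → F} (hf : f.Even) : (_root_.deriv f).Odd := fun x => by
  have h := deriv_comp_neg f x
  rw [show (fun y => f (-y)) = f from funext hf] at h
  rw [h, neg_neg]

theorem Function.Odd.deriv {𝕜 F : Type*} [NontriviallyNormedField 𝕜] [NormedAddCommGroup F]
    [NormedSpace 𝕜 F] {f : 𝕜 → F} (hf : f.Odd) : (_root_.deriv f).Even := fun x => by
  have h := deriv_comp_neg f x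
  rw [show (fun y => f (-y)) = -f from funext hf, deriv.neg] at h
  exact (neg_inj.1 h).symm

theorem hasDerivAt_exp_mul_comp_exp {F : ℝ → ℝ} {F' : ℝ} (a : ℝ) {s : ℝ}
    (hF : HasDerivAt F F' (exp s)) :
    HasDerivAt (fun s => exp (a * s) * F (exp s))
      (exp (a * s) * (a * F (exp s) + exp s * F')) s := by
  have h1 := ((hasDerivAt_id s).const_mul a).exp
  have h2 := hF.comp s (hasDerivAt_exp s)
  exact (h1.mul h2).congr_deriv (by simp only [id, Function.comp]; ring)

noncomputable def thetaMoment (k : ℕ) (u : ℝ) : ℝ :=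
  ∑' n : ℤ, (n : ℝ) ^ k * exp (-π * n ^ 2 * u)

theorem summable_abs_pow_mul_exp_neg_pi_mul_sq (k : ℕ) {u : ℝ} (hu : 0 < u) :
    Summable fun n : ℤ => |(n : ℝ)| ^ k * exp (-π * n ^ 2 * u) := by
  simpa [mul_assoc, mul_comm u] using summable_pow_mul_jacobiTheta₂_term_bound 0 hu k

theorem summable_pow_mul_exp_neg_pi_mul_sq (k : ℕ) {u : ℝ} (hu : 0 < u) :
    Summable fun n : ℤ => (n : ℝ) ^ k * exp (-π * n ^ 2 * u) :=
  (summable_abs_pow_mul_exp_neg_pi_mul_sq k hu).of_norm_bounded fun n => by simp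

theorem hasDerivAt_thetaMoment (k : ℕ) {u : ℝ} (hu : 0 < u) :
    HasDerivAt (thetaMoment k) (-π * thetaMoment (k + 2) u) u := by
  have hterm (n : ℤ) (y : ℝ) : HasDerivAt (fun y => (n : ℝ) ^ k * exp (-π * n ^ 2 * y))
      ((n : ℝ) ^ k * (exp (-π * n ^ 2 * y) * (-π * n ^ 2))) y :=
    (((hasDerivAt_id y).const_mul (-π * n ^ 2)).exp.const_mul _).congr_deriv (by simp)
  have hbound (n : ℤ) (y : ℝ) (hy : y ∈ Set.Ioi (u / 2)) :
      ‖(n : ℝ) ^ k * (exp (-π * n ^ 2 * y) * (-π * n ^ 2))‖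
        ≤ π * (|(n : ℝ)| ^ (k + 2) * exp (-π * n ^ 2 * (u / 2))) := by
    have hexp : exp (-π * n ^ 2 * y) ≤ exp (-π * n ^ 2 * (u / 2)) :=
      exp_le_exp.2 (by nlinarith [mul_nonneg pi_pos.le (sq_nonneg (n : ℝ)), hy.out.le])
    calc ‖(n : ℝ) ^ k * (exp (-π * n ^ 2 * y) * (-π * n ^ 2))‖
        = π * (|(n : ℝ)| ^ (k + 2) * exp (-π * n ^ 2 * y)) := by
          simp only [norm_mul, norm_pow, norm_neg, Real.norm_eq_abs, abs_exp, sq_abs,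
            abs_of_pos pi_pos, pow_add]
          ring
      _ ≤ π * (|(n : ℝ)| ^ (k + 2) * exp (-π * n ^ 2 * (u / 2))) := by gcongr
  have h := hasDerivAt_tsum_of_isPreconnected
    ((summable_abs_pow_mul_exp_neg_pi_mul_sq (k + 2) (half_pos hu)).mul_left π) isOpen_Ioi
    isPreconnected_Ioi (fun n y _ => hterm n y) hbound (half_lt_self hu)
    (summable_pow_mul_exp_neg_pi_mul_sq k hu) (half_lt_self hu)
  refine h.congr_deriv ?_
  rw [thetaMoment, ← tsum_mul_left]
  exact tsum_congr fun n => by ring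

theorem thetaMoment_zero_exp (s : ℝ) :
    thetaMoment 0 (exp s) = exp (-(s / 2)) * thetaMoment 0 (exp (-s)) := by
  have h := tsum_exp_neg_mul_int_sq (exp_pos s)
  rw [← exp_mul, mul_one_div, one_div, ← exp_neg, div_eq_mul_inv (-π), ← exp_neg] at h
  simpa only [thetaMoment, pow_zero, one_mul, mul_right_comm (-π)] using h

noncomputable def normalizedTheta (s : ℝ) : ℝ := exp (1 / 4 * s) * thetaMoment 0 (exp s)

theorem normalizedTheta_even : normalizedTheta.Even := fun s => by
  rw [normalizedTheta, normalizedTheta, thetaMoment_zero_exp, neg_neg, ← mul_assoc, ← exp_add]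
  ring_nf

noncomputable def thetaKernel (u : ℝ) : ℝ := 2 * π * u * thetaMoment 4 u - 3 * thetaMoment 2 u

theorem deriv_normalizedTheta :
    deriv normalizedTheta = fun s =>
      exp (1 / 4 * s) * (1 / 4 * thetaMoment 0 (exp s) - π * exp s * thetaMoment 2 (exp s)) :=
  funext fun s => ((hasDerivAt_exp_mul_comp_exp (1 / 4)
    (hasDerivAt_thetaMoment 0 (exp_pos s))).congr_deriv (by ring)).deriv

theorem deriv_deriv_normalizedTheta (s : ℝ) :
    deriv (deriv normalizedTheta) s =
      normalizedTheta s / 16 + π / 2 * (exp (5 / 4 * s) * thetaKernel (exp s)) := by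
  have hu := exp_pos s
  have hF : HasDerivAt (fun u => 1 / 4 * thetaMoment 0 u - π * u * thetaMoment 2 u)
      (1 / 4 * (-π * thetaMoment 2 (exp s))
        - π * (exp s * (-π * thetaMoment 4 (exp s)) + thetaMoment 2 (exp s))) (exp s) := by
    have h := ((hasDerivAt_thetaMoment 0 hu).const_mul (1 / 4)).sub
      (((hasDerivAt_id (exp s)).const_mul π).mul (hasDerivAt_thetaMoment 2 hu))
    exact h.congr_deriv (by simp only [id]; ring)
  rw [deriv_normalizedTheta, (hasDerivAt_exp_mul_comp_exp (1 / 4) hF).deriv, normalizedTheta,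
    thetaKernel, show 5 / 4 * s = 1 / 4 * s + s by ring, exp_add]
  ring

theorem exp_mul_thetaKernel_exp_even :
    (fun s => exp (5 / 4 * s) * thetaKernel (exp s)).Even := fun s => by
  have h := normalizedTheta_even.deriv.deriv s
  rw [deriv_deriv_normalizedTheta, deriv_deriv_normalizedTheta, normalizedTheta_even] at h
  have hπ : π / 2 ≠ 0 := by positivity
  exact mul_left_cancel₀ hπ (by linarith)

theorem hasSum_thetaKernel {u : ℝ} (hu : 0 < u) :
    HasSum (fun n : ℤ => (2 * π * u * (n : ℝ) ^ 4 - 3 * (n : ℝ) ^ 2) * exp (-π * n ^ 2 * u))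
      (thetaKernel u) :=
  ((((summable_pow_mul_exp_neg_pi_mul_sq 4 hu).hasSum.mul_left (2 * π * u)).sub
    ((summable_pow_mul_exp_neg_pi_mul_sq 2 hu).hasSum.mul_left 3))).congr_fun fun n => by ring

theorem thetaKernel_pos_of_one_le {u : ℝ} (hu : 1 ≤ u) : 0 < thetaKernel u := by
  have hcoeff (n : ℤ) : 0 ≤ 2 * π * u * (n : ℝ) ^ 4 - 3 * (n : ℝ) ^ 2 := by
    rcases eq_or_ne n 0 with rfl | hn
    · simp
    have hn_sq : (1 : ℝ) ≤ (n : ℝ) ^ 2 := by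
      rw [← sq_abs]
      exact one_le_pow₀ (by exact_mod_cast Int.one_le_abs hn)
    have hπu : 3 ≤ 2 * π * u := by nlinarith [pi_gt_three]
    have h : 0 ≤ (n : ℝ) ^ 2 * (2 * π * u * n ^ 2 - 3) :=
      mul_nonneg (sq_nonneg _) (by nlinarith)
    linear_combination h
  refine hasSum_lt (f := 0) (i := 1) (fun n => ?_) ?_ hasSum_zero
    (hasSum_thetaKernel (by linarith))
  · exact mul_nonneg (hcoeff n) (exp_pos _).le
  · simp only [Pi.zero_apply, Int.cast_one, one_pow, mul_one]
    exact mul_pos (by nlinarith [pi_gt_three]) (exp_pos _)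

theorem thetaKernel_eq_two_mul_tsum {u : ℝ} (hu : 0 < u) :
    thetaKernel u = 2 * ∑' n : ℕ, (2 * π * u * ((n : ℝ) + 1) ^ 4 - 3 * ((n : ℝ) + 1) ^ 2)
      * exp (-π * ((n : ℝ) + 1) ^ 2 * u) := by
  have h := hasSum_thetaKernel hu
  rw [← h.tsum_eq, tsum_int_eq_zero_add_two_mul_tsum_pnat
    (fun n => by simp [Even.neg_pow ⟨2, rfl⟩]) h.summable, tsum_pnat_eq_tsum_succ
    (f := fun n : ℕ => (2 * π * u * ((n : ℤ) : ℝ) ^ 4 - 3 * ((n : ℤ) : ℝ) ^ 2)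
      * exp (-π * ((n : ℤ) : ℝ) ^ 2 * u))]
  simp

theorem phi_eq_thetaKernel (t : ℝ) :
    phi t = π * (exp (5 / 4 * (-2 * t)) * thetaKernel (exp (-2 * t))) := by
  have h9 : exp (-9 * t / 2) = exp (5 / 4 * (-2 * t)) * exp (-2 * t) := by
    rw [← exp_add]; ring_nf
  have h5 : exp (-5 * t / 2) = exp (5 / 4 * (-2 * t)) := by ring_nf
  rw [phi, thetaKernel_eq_two_mul_tsum (exp_pos _), h9, h5]
  simp_rw [← tsum_mul_left]
  exact tsum_congr fun n => by ring_nf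

theorem exp_mul_thetaKernel_exp_pos (s : ℝ) : 0 < exp (5 / 4 * s) * thetaKernel (exp s) := by
  have hpos {s : ℝ} (hs : 0 ≤ s) : 0 < exp (5 / 4 * s) * thetaKernel (exp s) :=
    mul_pos (exp_pos _) (thetaKernel_pos_of_one_le (one_le_exp hs))
  rcases le_total 0 s with hs | hs
  · exact hpos hs
  · exact (hpos (neg_nonneg.2 hs)).trans_eq (exp_mul_thetaKernel_exp_even s)

theorem phi_pos : ∀ t : ℝ, 0 < phi t := fun t => by
  rw [phi_eq_thetaKernel]
  exact mul_pos pi_pos (exp_mul_thetaKernel_exp_pos _)
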